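/- arXiv:2111.00863 — 2 statements merged into one kernel-verified Lean document; each statement's English description precedes it below -/
import Mathlib

section
/- The word a^n b a^n b a^n over the alphabet {a,b} contains Θ(n²) distinct closed factors; more precisely, the number of distinct closed factors of a^n b a^n b a^n is at least n²/2 (for n sufficiently large). -/
/-!
For `i, j ≤ n` the factor `aⁱ b aⁿ b aʲ` of `aⁿ b aⁿ b aⁿ` is closed: its border `aⁱ b aʲ` has a
single `b`, at position `i`, so an occurrence of the border at position `s` puts a `b` at `s + i`,
which must be one of the two positions `i`, `i + n + 1` of `b`; hence the border occurs exactly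
twice. These `(n + 1)²` factors are pairwise distinct: `i` is the position of the first `b`, and
`j` is then read off the length.
-/

open List

variable {α : Type*}

/-- Number of occurrences of `u` as a factor of `w` (by starting position). -/
def occCount [DecidableEq α] (u w : List α) : ℕ :=
  ((Finset.range (w.length + 1)).filter
    (fun i => i + u.length ≤ w.length ∧ (w.drop i).take u.length = u)).card

/-- A finite word is closed if it has length ≤ 1 or it has a border occurring
exactly twice in it (as prefix and as suffix). -/
def ClosedWord [DecidableEq α] (w : List α) : Prop :=
  w.length ≤ 1 ∨ ∃ k ∈ Finset.Ioo 0 w.length,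
    (w.take k) <:+ w ∧ occCount (w.take k) w = 2

instance [DecidableEq α] (w : List α) : Decidable (ClosedWord w) := by
  unfold ClosedWord; infer_instance

/-- The finite set of distinct closed factors of `w`. -/
def closedFactors [DecidableEq α] (w : List α) : Finset (List α) :=
  (w.inits.flatMap List.tails).toFinset.filter ClosedWord

/-- The number of distinct closed factors of `w`. -/
def clCount [DecidableEq α] (w : List α) : ℕ := (closedFactors w).card

/-- `t` is a period of the finite word `w`. -/
def HasPeriod (w : List α) (t : ℕ) : Prop := 0 < t ∧ w.drop t <+: w

/-- Factor of the infinite word `w` starting at `i` of length `m`. -/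
def factorAt (w : ℕ → α) (i m : ℕ) : List α := (List.range m).map (fun j => w (i + j))

/-- `u` occurs in the infinite word `w` at position `i`. -/
def occursAt (w : ℕ → α) (u : List α) (i : ℕ) : Prop := factorAt w i u.length = u

/-- An infinite word is aperiodic if it is not eventually periodic. -/
def Aperiodic' (w : ℕ → α) : Prop := ¬ ∃ p, 0 < p ∧ ∃ N, ∀ n ≥ N, w (n + p) = w n

/-- A finite word is primitive if it is not an integer power of a shorter word. -/
def Primitive (u : List α) : Prop :=
  u ≠ [] ∧ ∀ (v : List α) (k : ℕ), 2 ≤ k → u ≠ (List.replicate k v).flatten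

namespace List

theorem mem_inits_flatMap_tails {u w : List α} : u ∈ w.inits.flatMap tails ↔ u <:+: w := by
  simp only [mem_flatMap, mem_inits, mem_tails, infix_iff_suffix_prefix]
  exact ⟨fun ⟨t, ht, hu⟩ => ⟨t, hu, ht⟩, fun ⟨t, hu, ht⟩ => ⟨t, ht, hu⟩⟩

theorem getElem_eq_of_take_drop_eq {u w : List α} {s p : ℕ} (h : (w.drop s).take u.length = u)
    (hp : p < u.length) (hsp : s + p < w.length) : w[s + p] = u[p] := by
  have := getElem_of_eq h (i := p) (by simp; omega)
  simpa using this

theorem idxOf_replicate_append_cons [BEq α] [LawfulBEq α] {a b : α} (hab : a ≠ b) (i : ℕ)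
    (l : List α) : idxOf b (replicate i a ++ b :: l) = i := by
  rw [idxOf_append_of_notMem (by simp [mem_replicate, hab.symm]), idxOf_cons_self]
  simp

end List

section Occurrences

variable [DecidableEq α] {u w : List α}

theorem occCount_eq_two_of_prefix_of_suffix (hpre : u <+: w) (hsuf : u <:+ w)
    (hlt : u.length < w.length)
    (hocc : ∀ s, s + u.length ≤ w.length → (w.drop s).take u.length = u →
      s = 0 ∨ s = w.length - u.length) :
    occCount u w = 2 := by
  have hset : (Finset.range (w.length + 1)).filter
      (fun s => s + u.length ≤ w.length ∧ (w.drop s).take u.length = u)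
      = {0, w.length - u.length} := by
    ext s
    simp only [Finset.mem_filter, Finset.mem_range, Finset.mem_insert, Finset.mem_singleton]
    constructor
    · rintro ⟨-, hle, heq⟩
      exact hocc s hle heq
    · rintro (rfl | rfl)
      · exact ⟨by omega, by omega, by rw [drop_zero, ← prefix_iff_eq_take.mp hpre]⟩
      · refine ⟨by omega, by omega, ?_⟩
        rw [← suffix_iff_eq_drop.mp hsuf, take_length]
  rw [occCount, hset, Finset.card_pair (by omega)]

theorem closedWord_of_occCount_eq_two (hpre : u <+: w) (hsuf : u <:+ w) (hpos : 0 < u.length)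
    (hlt : u.length < w.length) (htwo : occCount u w = 2) : ClosedWord w := by
  have htake : w.take u.length = u := (prefix_iff_eq_take.mp hpre).symm
  exact Or.inr ⟨u.length, Finset.mem_Ioo.mpr ⟨hpos, hlt⟩, by rwa [htake], by rwa [htake]⟩

theorem mem_closedFactors : u ∈ closedFactors w ↔ u <:+: w ∧ ClosedWord u := by
  rw [closedFactors, Finset.mem_filter, mem_toFinset, mem_inits_flatMap_tails]

end Occurrences

section TwoLetters

variable (a b : α)

def borderWord (i j : ℕ) : List α := replicate i a ++ [b] ++ replicate j a

def borderedWord (n i j : ℕ) : List α := borderWord a b i n ++ [b] ++ replicate j a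

variable {a b}

theorem length_borderWord (i j : ℕ) : (borderWord a b i j).length = i + j + 1 := by
  simp [borderWord]; omega

theorem length_borderedWord (n i j : ℕ) : (borderedWord a b n i j).length = i + n + j + 2 := by
  simp [borderedWord, length_borderWord]; omega

theorem getElem_borderWord_self (i j : ℕ) (h : i < (borderWord a b i j).length) :
    (borderWord a b i j)[i] = b := by
  simp [borderWord]

theorem getElem_borderedWord_eq_iff (hab : a ≠ b) {n i j p : ℕ}
    (h : p < (borderedWord a b n i j).length) :
    (borderedWord a b n i j)[p] = b ↔ p = i ∨ p = i + n + 1 := by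
  rw [length_borderedWord] at h
  simp only [borderedWord, borderWord, getElem_append, length_append, length_replicate,
    length_cons, length_nil, getElem_replicate]
  split_ifs <;> simp_all [getElem_singleton] <;> omega

theorem borderWord_prefix_borderedWord {n j : ℕ} (i : ℕ) (hj : j ≤ n) :
    borderWord a b i j <+: borderedWord a b n i j := by
  refine ⟨replicate (n - j) a ++ [b] ++ replicate j a, ?_⟩
  simp only [borderedWord, borderWord, append_assoc, cons_append]
  rw [← append_assoc (replicate j a), replicate_append_replicate, Nat.add_sub_cancel' hj]

theorem borderWord_suffix_borderedWord {n i : ℕ} (hi : i ≤ n) (j : ℕ) :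
    borderWord a b i j <:+ borderedWord a b n i j := by
  refine ⟨replicate i a ++ [b] ++ replicate (n - i) a, ?_⟩
  simp only [borderedWord, borderWord, append_assoc, cons_append]
  rw [← append_assoc (replicate (n - i) a), replicate_append_replicate, Nat.sub_add_cancel hi]

theorem closedWord_borderedWord [DecidableEq α] (hab : a ≠ b) {n i j : ℕ} (hi : i ≤ n)
    (hj : j ≤ n) : ClosedWord (borderedWord a b n i j) := by
  have hlen := length_borderedWord (a := a) (b := b) n i j
  have hulen := length_borderWord (a := a) (b := b) i j
  refine closedWord_of_occCount_eq_two (borderWord_prefix_borderedWord i hj)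
    (borderWord_suffix_borderedWord hi j) (by omega) (by omega)
    (occCount_eq_two_of_prefix_of_suffix (borderWord_prefix_borderedWord i hj)
      (borderWord_suffix_borderedWord hi j) (by omega) fun s _ hocc => ?_)
  have hb := getElem_eq_of_take_drop_eq hocc (p := i) (by omega) (by omega)
  rw [getElem_borderWord_self, getElem_borderedWord_eq_iff hab] at hb
  omega

theorem borderedWord_infix {n i j : ℕ} (hi : i ≤ n) (hj : j ≤ n) :
    borderedWord a b n i j <:+:
      replicate n a ++ [b] ++ replicate n a ++ [b] ++ replicate n a := by
  refine ⟨replicate (n - i) a, replicate (n - j) a, ?_⟩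
  simp only [borderedWord, borderWord, append_assoc, cons_append, replicate_append_replicate,
    Nat.add_sub_cancel' hj]
  rw [← append_assoc, replicate_append_replicate, Nat.sub_add_cancel hi]

theorem borderedWord_injective [DecidableEq α] (hab : a ≠ b) (n : ℕ) :
    Function.Injective fun p : ℕ × ℕ => borderedWord a b n p.1 p.2 := by
  rintro ⟨i, j⟩ ⟨i', j'⟩ h
  have hi : i = i' := by
    simpa [borderedWord, borderWord, idxOf_replicate_append_cons hab] using congrArg (idxOf b) h
  have hj : j = j' := by
    have := congrArg length h
    simp only [length_borderedWord] at this
    omega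
  rw [hi, hj]

theorem sq_succ_le_clCount [DecidableEq α] (hab : a ≠ b) (n : ℕ) :
    (n + 1) ^ 2 ≤
      clCount (replicate n a ++ [b] ++ replicate n a ++ [b] ++ replicate n a) := by
  rw [sq, ← Finset.card_range (n + 1), ← Finset.card_product]
  refine Finset.card_le_card_of_injOn _ ?_ (borderedWord_injective hab n).injOn
  rintro ⟨i, j⟩ hij
  simp only [Finset.coe_product, Set.mem_prod, Finset.mem_coe, Finset.mem_range] at hij
  exact mem_closedFactors.mpr
    ⟨borderedWord_infix (by omega) (by omega),
      closedWord_borderedWord hab (by omega) (by omega)⟩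

end TwoLetters

/-- the word aⁿbaⁿbaⁿ has at least n²/2 distinct closed factors for
all sufficiently large n. -/
theorem stmt8 [DecidableEq α] (a b : α) (hab : a ≠ b) :
    ∃ N : ℕ, ∀ n ≥ N,
      n ^ 2 ≤ 2 * clCount (List.replicate n a ++ [b] ++ List.replicate n a ++ [b]
        ++ List.replicate n a) :=
  ⟨0, fun n _ => (Nat.pow_le_pow_left n.le_succ 2).trans
    ((sq_succ_le_clCount hab n).trans (Nat.le_mul_of_pos_left _ two_pos))⟩
end

section
/- Let w be an infinite word of unbounded exponent (for every k there exists a factor of w with exponent at least k). Then w is not closed-rich: there is no constant C > 0 such that every factor of w of length n contains at least C·n² distinct closed factors. -/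
/-!
A word of length `m` with period `t` has at most `t * (m + 1)` distinct factors, since every
factor already occurs at a position below `t`; in particular it has at most `t * (m + 1)` closed
factors. If `w` has factors of length `m` with periods `t ≤ m / k` for arbitrarily large `k`,
the lower bound `C * m ^ 2` would give `C * m ^ 2 ≤ 2 * t * m ≤ 2 * m ^ 2 / k`, which fails
once `k > 2 / C`.
-/

open List

variable {α : Type*}

namespace HasPeriod

variable {u : List α} {t : ℕ}

lemma getElem_add_mul (hp : _root_.HasPeriod u t) (j c : ℕ) (hj : j + c * t < u.length) :
    u[j + c * t] = u[j]'(by nlinarith) := by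
  induction c with
  | zero => simp
  | succ c ih =>
    have hlt : j + c * t < (u.drop t).length := by rw [length_drop]; grind
    have hshift : u[j + c * t + t]'(by grind) = u[j + c * t]'(by grind) := by
      simpa [Nat.add_comm t] using hp.2.getElem hlt
    simp only [Nat.succ_mul, ← Nat.add_assoc, hshift]
    exact ih (by grind)

lemma drop_take_mod (hp : _root_.HasPeriod u t) {i ℓ : ℕ} (h : i + ℓ ≤ u.length) :
    (u.drop (i % t)).take ℓ = (u.drop i).take ℓ := by
  have hi : i % t + i / t * t = i := Nat.mod_add_div' i t
  apply List.ext_getElem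
  · simp only [length_take, length_drop]; omega
  · intro n h₁ _
    simp only [getElem_take, getElem_drop]
    have := hp.getElem_add_mul (i % t + n) (i / t) (by simp at h₁; omega)
    grind

lemma card_factors_le (hp : _root_.HasPeriod u t) [DecidableEq α] :
    (u.inits.flatMap tails).toFinset.card ≤ t * (u.length + 1) := by
  have hsub : (u.inits.flatMap tails).toFinset ⊆
      (Finset.range t ×ˢ Finset.range (u.length + 1)).image
        (fun p : ℕ × ℕ => (u.drop p.1).take p.2) := by
    intro v hv
    simp only [mem_toFinset, mem_flatMap, mem_inits, mem_tails] at hv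
    obtain ⟨p, hpu, hvp⟩ := hv
    obtain ⟨s, r, rfl⟩ : v <:+: u := hvp.isInfix.trans hpu.isInfix
    have hlen : s.length + v.length ≤ (s ++ v ++ r).length := by simp
    refine Finset.mem_image.2 ⟨(s.length % t, v.length), ?_, ?_⟩
    · simp only [Finset.mem_product, Finset.mem_range]
      exact ⟨Nat.mod_lt _ hp.1, by omega⟩
    · rw [hp.drop_take_mod hlen, append_assoc, drop_left, take_left]
  calc _ ≤ _ := Finset.card_le_card hsub
    _ ≤ (Finset.range t ×ˢ Finset.range (u.length + 1)).card := Finset.card_image_le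
    _ = t * (u.length + 1) := by simp

lemma clCount_le (hp : _root_.HasPeriod u t) [DecidableEq α] :
    clCount u ≤ t * (u.length + 1) :=
  (Finset.card_filter_le _ _).trans hp.card_factors_le

end HasPeriod

lemma length_factorAt (w : ℕ → α) (i m : ℕ) : (factorAt w i m).length = m := by
  simp [factorAt]

lemma mul_le_two_of_sq_le_mul_succ {C : ℝ} {k t m : ℕ} (hk : 0 < k) (ht : 0 < t)
    (hkt : k * t ≤ m) (hC : C * (m : ℝ) ^ 2 ≤ t * (m + 1)) : C * k ≤ 2 := by
  have hm : (1 : ℝ) ≤ m := by exact_mod_cast (Nat.mul_pos hk ht).trans_le hkt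
  have hkt' : (k : ℝ) * t ≤ m := by exact_mod_cast hkt
  have hk' : (0 : ℝ) ≤ k := k.cast_nonneg
  refine le_of_mul_le_mul_right ?_ (by positivity : (0 : ℝ) < (m : ℝ) ^ 2)
  calc C * k * (m : ℝ) ^ 2 = (k : ℝ) * (C * (m : ℝ) ^ 2) := by ring
    _ ≤ (k : ℝ) * (t * (m + 1)) := mul_le_mul_of_nonneg_left hC hk'
    _ ≤ 2 * (m : ℝ) * (k * t) := by nlinarith [mul_nonneg hk' t.cast_nonneg]
    _ ≤ 2 * (m : ℝ) ^ 2 := by nlinarith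

/-- an infinite word of unbounded exponent is not closed-rich. -/
theorem stmt11 (w : ℕ → α) [DecidableEq α]
    (h : ∀ k : ℕ, ∃ i m t : ℕ, _root_.HasPeriod (factorAt w i m) t ∧ k * t ≤ m) :
    ¬ ∃ C : ℝ, 0 < C ∧ ∀ n i : ℕ,
        C * (n : ℝ) ^ 2 ≤ (clCount (factorAt w i n) : ℝ) := by
  rintro ⟨C, hC, hcl⟩
  obtain ⟨k, hk⟩ := exists_nat_gt (2 / C)
  have hCk : 2 < C * k := by rwa [div_lt_iff₀ hC, mul_comm] at hk
  obtain ⟨i, m, t, hp, hkt⟩ := h k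
  have hupper : (clCount (factorAt w i m) : ℝ) ≤ t * (m + 1) := by
    exact_mod_cast length_factorAt w i m ▸ hp.clCount_le
  have hle := mul_le_two_of_sq_le_mul_succ
    (Nat.cast_pos.1 (pos_of_mul_pos_right (two_pos.trans hCk) hC.le)) hp.1 hkt
    ((hcl m i).trans hupper)
  exact hle.not_gt hCk
end
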